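/- Suppose the trapping probabilities satisfy p_x ≥ p for all x ≠ o, for some p > 0. Then all moments of the survival time are finite under the annealed law: E_o(T(ω)^k) < ∞ for every k ∈ N. -/

import Mathlib

open MeasureTheory ProbabilityTheory
open scoped ENNReal

/-- One step of the simple random walk on the `q`-ary tree (vertices: words over `Fin q`, root =
empty word), driven by a uniform random seed `u`: at the root (degree `q`) move to child `u % q`;
at any other vertex (degree `q+1`) move to child `u % (q+1)` if `u % (q+1) < q`, and to the parent
otherwise. -/
def treeStep (q : ℕ) (v : List (Fin q)) (u : ℕ) : List (Fin q) :=
  match v with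
  | [] => if h : u % q < q then [⟨u % q, h⟩] else []
  | a :: t => if h : u % (q + 1) < q then ⟨u % (q + 1), h⟩ :: a :: t else t

/-- The simple random walk path on the `q`-ary tree started at the root. -/
def treeWalk (q : ℕ) (u : ℕ → ℕ) : ℕ → List (Fin q)
  | 0 => []
  | n + 1 => treeStep q (treeWalk q u n) (u n)

/-- The survival time `T(ω) = inf {k ≥ 0 : ω(S_k) = 1}` of the walk among the traps `τ`,
as an element of `[0,∞]` (it equals `∞` if no trap is ever visited). -/
noncomputable def treeHit (q : ℕ) (τ : List (Fin q) → Bool) (u : ℕ → ℕ) : ℝ≥0∞ :=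
  sInf {t : ℝ≥0∞ | ∃ k : ℕ, t = (k : ℝ≥0∞) ∧ τ (treeWalk q u k) = true}

/-!
If the walk survives up to time `n`, it has visited every vertex on the geodesic from the root
to `S_n`; these `|S_n|` non-root vertices are independently trap-free with probability at most
`r` each, for any `r ≥ 1 - p`. Bounding `r ^ |S_n|` by the product of the step weights `r` (step
away from the root) and `r⁻¹` (step towards it), independence of the steps gives
`P(T > n) ≤ g ^ n` with `g = (q r + r⁻¹) / (q + 1)`, and `g < 1` as soon as `1 / q < r < 1`.
Geometric tails make every moment finite.
-/

open scoped NNReal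
open Finset

lemma ENNReal.pow_le_tsum_ite_lt (x : ℝ≥0∞) {k : ℕ} (hk : k ≠ 0) :
    x ^ k ≤ ∑' n : ℕ, if (n : ℝ≥0∞) < x then ((n : ℝ≥0∞) + 1) ^ k else 0 := by
  rcases eq_or_ne x ⊤ with rfl | hx
  · have hterm : ∀ n : ℕ, (1 : ℝ≥0∞) ≤ if (n : ℝ≥0∞) < ⊤ then ((n : ℝ≥0∞) + 1) ^ k else 0 :=
      fun n => by simpa using one_le_pow₀ le_add_self
    calc ⊤ ^ k ≤ ∑' _ : ℕ, (1 : ℝ≥0∞) := by simp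
      _ ≤ _ := ENNReal.tsum_le_tsum hterm
  lift x to ℝ≥0 using hx
  rcases eq_or_ne x 0 with rfl | hx0
  · simp [hk]
  obtain ⟨s, hs⟩ : ∃ s, ⌈x⌉₊ = s + 1 :=
    Nat.exists_eq_add_one.2 (Nat.ceil_pos.2 (pos_iff_ne_zero.2 hx0))
  have hsx : (s : ℝ≥0∞) < x := by exact_mod_cast Nat.lt_ceil.1 (hs ▸ s.lt_add_one)
  calc (x : ℝ≥0∞) ^ k ≤ ((s : ℝ≥0∞) + 1) ^ k := by
        gcongr; exact_mod_cast hs ▸ Nat.le_ceil x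
    _ = if (s : ℝ≥0∞) < x then ((s : ℝ≥0∞) + 1) ^ k else 0 := by rw [if_pos hsx]
    _ ≤ _ := ENNReal.le_tsum s

lemma ENNReal.tsum_add_one_pow_mul_pow_lt_top {g : ℝ≥0∞} (hg : g < 1) (k : ℕ) :
    ∑' n : ℕ, ((n : ℝ≥0∞) + 1) ^ k * g ^ n < ⊤ := by
  lift g to ℝ≥0 using hg.ne_top
  have hsum : Summable fun n : ℕ => ((n + k).descFactorial k : ℝ≥0) * g ^ n := by
    rw [← NNReal.summable_coe]
    push_cast
    exact summable_descFactorial_mul_geometric_of_norm_lt_one k (by simpa using hg)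
  calc ∑' n : ℕ, ((n : ℝ≥0∞) + 1) ^ k * (g : ℝ≥0∞) ^ n
      ≤ ∑' n : ℕ, (((n + k).descFactorial k * g ^ n : ℝ≥0) : ℝ≥0∞) := by
        refine ENNReal.tsum_le_tsum fun n => ?_
        push_cast
        gcongr
        have := Nat.pow_sub_le_descFactorial (n + k) k
        rw [Nat.add_right_comm, Nat.add_sub_cancel] at this
        exact_mod_cast this
    _ < ⊤ := ENNReal.coe_tsum hsum ▸ ENNReal.coe_lt_top

section Moments

variable {α : Type*} [MeasurableSpace α] (μ : Measure α) {f : α → ℝ≥0∞}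

lemma lintegral_pow_le_tsum_mul_measure_lt (hf : ∀ n : ℕ, MeasurableSet {x | (n : ℝ≥0∞) < f x})
    {k : ℕ} (hk : k ≠ 0) :
    ∫⁻ x, f x ^ k ∂μ ≤ ∑' n : ℕ, ((n : ℝ≥0∞) + 1) ^ k * μ {x | (n : ℝ≥0∞) < f x} :=
  calc ∫⁻ x, f x ^ k ∂μ
      ≤ ∫⁻ x, ∑' n : ℕ, {x | (n : ℝ≥0∞) < f x}.indicator (fun _ => ((n : ℝ≥0∞) + 1) ^ k) x ∂μ :=
        lintegral_mono fun x => by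
          simpa only [Set.indicator_apply, Set.mem_ofPred_eq] using ENNReal.pow_le_tsum_ite_lt _ hk
    _ = ∑' n : ℕ, ((n : ℝ≥0∞) + 1) ^ k * μ {x | (n : ℝ≥0∞) < f x} := by
        rw [lintegral_tsum fun n => (measurable_const.indicator (hf n)).aemeasurable]
        exact tsum_congr fun n => lintegral_indicator_const (hf n) _

theorem lintegral_pow_lt_top_of_measure_lt_le_geometric [IsFiniteMeasure μ]
    (hf : ∀ n : ℕ, MeasurableSet {x | (n : ℝ≥0∞) < f x}) {g : ℝ≥0∞} (hg : g < 1)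
    (hfg : ∀ n : ℕ, μ {x | (n : ℝ≥0∞) < f x} ≤ g ^ n) (k : ℕ) :
    ∫⁻ x, f x ^ k ∂μ < ⊤ := by
  rcases eq_or_ne k 0 with rfl | hk
  · simp
  calc ∫⁻ x, f x ^ k ∂μ ≤ ∑' n : ℕ, ((n : ℝ≥0∞) + 1) ^ k * μ {x | (n : ℝ≥0∞) < f x} :=
        lintegral_pow_le_tsum_mul_measure_lt μ hf hk
    _ ≤ ∑' n : ℕ, ((n : ℝ≥0∞) + 1) ^ k * g ^ n :=
        ENNReal.tsum_le_tsum fun n => by gcongr; exact hfg n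
    _ < ⊤ := ENNReal.tsum_add_one_pow_mul_pow_lt_top hg k

end Moments

section TreeWalk

variable {q : ℕ}

lemma lt_treeHit_iff {τ : List (Fin q) → Bool} {u : ℕ → ℕ} {n : ℕ} :
    (n : ℝ≥0∞) < treeHit q τ u ↔ ∀ k ≤ n, τ (treeWalk q u k) = false := by
  constructor
  · intro h k hk
    by_contra hτ
    have : treeHit q τ u ≤ k := sInf_le ⟨k, rfl, by simpa using hτ⟩
    exact (h.trans_le this).not_ge (by exact_mod_cast hk)
  · intro h
    refine (Nat.cast_lt.2 n.lt_add_one).trans_le (le_sInf ?_)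
    rintro _ ⟨k, rfl, hk⟩
    have : n < k := by
      by_contra! hkn
      simp [h k hkn] at hk
    exact_mod_cast this

/-- A tree walk visits every vertex between the root and its current position. -/
lemma exists_treeWalk_eq_drop (u : ℕ → ℕ) (n i : ℕ) :
    ∃ k ≤ n, treeWalk q u k = (treeWalk q u n).drop i := by
  induction n generalizing i with
  | zero => exact ⟨0, le_rfl, by simp [treeWalk]⟩
  | succ n ih =>
    show ∃ k ≤ n + 1, treeWalk q u k = (treeStep q (treeWalk q u n) (u n)).drop i
    cases hw : treeWalk q u n with
    | nil =>
      by_cases hc : u n % q < q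
      · cases i with
        | zero => exact ⟨n + 1, le_rfl, by simp [treeWalk, hw, treeStep, hc]⟩
        | succ i => exact ⟨0, by omega, by simp [treeWalk, treeStep, hc]⟩
      · exact ⟨0, by omega, by simp [treeWalk, treeStep, hc]⟩
    | cons a t =>
      by_cases hc : u n % (q + 1) < q
      · cases i with
        | zero => exact ⟨n + 1, le_rfl, by simp [treeWalk, hw, treeStep, hc]⟩
        | succ i =>
          obtain ⟨k, hk, hk'⟩ := ih i
          exact ⟨k, by omega, by simp [hk', hw, treeStep, hc]⟩
      · obtain ⟨k, hk, hk'⟩ := ih (i + 1)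
        exact ⟨k, by omega, by simp [hk', hw, treeStep, hc]⟩

lemma card_image_drop_range_length (l : List (Fin q)) :
    ((range l.length).image l.drop).card = l.length := by
  rw [card_image_of_injOn, card_range]
  intro i hi j hj hij
  simp only [coe_range, Set.mem_Iio] at hi hj
  have := congrArg List.length hij
  simp only [List.length_drop] at this
  omega

/-- `r` on seeds that move to a child, `r⁻¹` on seeds that move a non-root vertex to its parent. -/
noncomputable def stepWeight (q : ℕ) (r : ℝ≥0∞) (u : ℕ) : ℝ≥0∞ :=
  if u % (q + 1) < q then r else r⁻¹

lemma pow_length_treeStep_le {r : ℝ≥0∞} (hr0 : r ≠ 0) (hr1 : r ≤ 1) (v : List (Fin q)) (u : ℕ) :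
    r ^ (treeStep q v u).length ≤ r ^ v.length * stepWeight q r u := by
  have hr_inv : 1 ≤ r⁻¹ := ENNReal.one_le_inv.2 hr1
  have hrt : r ≠ ⊤ := ne_top_of_le_ne_top ENNReal.one_ne_top hr1
  by_cases hc : u % (q + 1) < q
  · have : u % q < q := Nat.mod_lt _ (by omega)
    cases v <;> simp [treeStep, stepWeight, hc, this, pow_succ]
  · cases v with
    | nil => simpa [stepWeight, hc] using (pow_le_one₀ zero_le hr1).trans hr_inv
    | cons a t =>
      simp [treeStep, stepWeight, hc, pow_succ, mul_assoc, ENNReal.mul_inv_cancel hr0 hrt]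

lemma pow_length_treeWalk_le_prod {r : ℝ≥0∞} (hr0 : r ≠ 0) (hr1 : r ≤ 1) (u : ℕ → ℕ) (n : ℕ) :
    r ^ (treeWalk q u n).length ≤ ∏ j ∈ range n, stepWeight q r (u j) := by
  induction n with
  | zero => simp [treeWalk]
  | succ n ih =>
    rw [prod_range_succ]
    exact (pow_length_treeStep_le hr0 hr1 _ _).trans (by gcongr)

end TreeWalk

lemma sum_stepWeight (q : ℕ) (r : ℝ≥0∞) :
    ∑ i : Fin (q * (q + 1)), stepWeight q r i = q * (q * r + r⁻¹) := by
  rw [← finProdFinEquiv.sum_comp, Fintype.sum_prod_type]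
  have hmod : ∀ (a : Fin q) (b : Fin (q + 1)), ((finProdFinEquiv (a, b) : ℕ)) % (q + 1) = b := by
    intro a b
    simp [finProdFinEquiv, Nat.mod_eq_of_lt b.isLt]
  simp only [stepWeight, hmod, Fin.sum_univ_castSucc, Fin.val_castSucc, Fin.is_lt, if_true,
    Fin.val_last, lt_irrefl, if_false, sum_const, card_univ, Fintype.card_fin, nsmul_eq_mul]

lemma stepWeight_mean_lt_one {q : ℕ} {m : ℝ} (hqm : 1 < q * m) (hm1 : m < 1) :
    ((q : ℝ≥0∞) * ENNReal.ofReal m + (ENNReal.ofReal m)⁻¹) / (q + 1) < 1 := by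
  have hm0 : 0 < m := pos_of_mul_pos_right (one_pos.trans hqm) (Nat.cast_nonneg q)
  have hreal : q * m + m⁻¹ < q + 1 := by
    rw [← sub_pos]
    have : 0 < (q * m - 1) * (1 - m) / m := by apply div_pos <;> nlinarith
    convert this using 1
    field_simp
    ring
  rw [ENNReal.div_lt_iff (by simp) (by simp), one_mul]
  convert (ENNReal.ofReal_lt_ofReal_iff (by positivity)).2 hreal using 1
  · rw [ENNReal.ofReal_add (by positivity) (by positivity), ENNReal.ofReal_mul (Nat.cast_nonneg q),
      ENNReal.ofReal_inv_of_pos hm0, ENNReal.ofReal_natCast]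
  · rw [ENNReal.ofReal_add (Nat.cast_nonneg q) zero_le_one, ENNReal.ofReal_natCast,
      ENNReal.ofReal_one]

section Seeds

variable {q : ℕ} {Ω : Type*} [MeasurableSpace Ω] {P : Measure Ω} {U : ℕ → Ω → Fin (q * (q + 1))}

lemma lintegral_stepWeight_eq (hq : q ≠ 0) {j : ℕ} (hUm : Measurable (U j))
    (hUu : ∀ i, P {ω | U j ω = i} = ((q * (q + 1) : ℕ) : ℝ≥0∞)⁻¹) (r : ℝ≥0∞) :
    ∫⁻ ω, stepWeight q r (U j ω) ∂P = (q * r + r⁻¹) / (q + 1) := by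
  rw [← lintegral_map (f := fun i : Fin (q * (q + 1)) => stepWeight q r i)
    (measurable_of_countable _) hUm, lintegral_fintype]
  simp_rw [Measure.map_apply hUm (measurableSet_singleton _), Set.preimage, Set.mem_singleton_iff,
    hUu, ← sum_mul, sum_stepWeight, ← div_eq_mul_inv]
  push_cast
  exact ENNReal.mul_div_mul_left _ _ (by simpa using hq) (by simp)

lemma lintegral_pow_length_treeWalk_le (hq : q ≠ 0) (hUm : ∀ n, Measurable (U n))
    (hUi : iIndepFun U P) (hUu : ∀ n i, P {ω | U n ω = i} = ((q * (q + 1) : ℕ) : ℝ≥0∞)⁻¹)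
    {r : ℝ≥0∞} (hr0 : r ≠ 0) (hr1 : r ≤ 1) (n : ℕ) :
    ∫⁻ ω, r ^ (treeWalk q (fun j => (U j ω : ℕ)) n).length ∂P ≤ ((q * r + r⁻¹) / (q + 1)) ^ n :=
  calc ∫⁻ ω, r ^ (treeWalk q (fun j => (U j ω : ℕ)) n).length ∂P
      ≤ ∫⁻ ω, ∏ j ∈ range n, stepWeight q r (U j ω) ∂P :=
        lintegral_mono fun ω => pow_length_treeWalk_le_prod hr0 hr1 _ n
    _ = ∏ j ∈ range n, ∫⁻ ω, stepWeight q r (U j ω) ∂P :=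
        lintegral_prod_eq_prod_lintegral_of_indepFun _ _
          (hUi.comp (fun _ i => stepWeight q r i) fun _ => measurable_of_countable _)
          fun j => (measurable_of_countable (fun i : Fin _ => stepWeight q r i)).comp (hUm j)
    _ = ((q * r + r⁻¹) / (q + 1)) ^ n := by
        simp [lintegral_stepWeight_eq hq (hUm _) (hUu _)]

end Seeds

lemma ProbabilityTheory.iIndepFun.measure_forall_mem_eq_le_pow {Ω ι β : Type*}
    [MeasurableSpace Ω] {μ : Measure Ω} [MeasurableSpace β] [MeasurableSingletonClass β]
    {X : ι → Ω → β} (hX : iIndepFun X μ) (S : Finset ι) (b : β) {r : ℝ≥0∞}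
    (hr : ∀ i ∈ S, μ {ω | X i ω = b} ≤ r) :
    μ {ω | ∀ i ∈ S, X i ω = b} ≤ r ^ S.card := by
  have : {ω | ∀ i ∈ S, X i ω = b} = ⋂ i ∈ S, X i ⁻¹' {b} := by ext; simp
  rw [this, hX.measure_inter_preimage_eq_mul S fun _ _ => measurableSet_singleton b, ← prod_const]
  exact prod_le_prod' hr

section Annealed

variable {q N : ℕ} {Ω₁ Ω₂ : Type*} [MeasurableSpace Ω₁] [MeasurableSpace Ω₂]
  {U : ℕ → Ω₁ → Fin N} {τ : List (Fin q) → Ω₂ → Bool}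

lemma measurableSet_treeWalk_eq (hUm : ∀ n, Measurable (U n)) (n : ℕ) (v : List (Fin q)) :
    MeasurableSet {ω | treeWalk q (fun j => (U j ω : ℕ)) n = v} := by
  induction n generalizing v with
  | zero => exact .const ([] = v)
  | succ n ih =>
    have : {ω | treeWalk q (fun j => (U j ω : ℕ)) (n + 1) = v} =
        ⋃ (w : List (Fin q)) (i : Fin N), {ω | treeWalk q (fun j => (U j ω : ℕ)) n = w} ∩
          U n ⁻¹' {i} ∩ {_ω | treeStep q w i = v} := by
      ext ω
      simp [treeWalk]
    rw [this]
    exact .iUnion fun w => .iUnion fun i =>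
      ((ih w).inter (hUm n (measurableSet_singleton i))).inter (.const _)

lemma measurableSet_lt_treeHit (hUm : ∀ n, Measurable (U n)) (hτm : ∀ x, Measurable (τ x))
    (n : ℕ) :
    MeasurableSet {ω : Ω₁ × Ω₂ |
      (n : ℝ≥0∞) < treeHit q (fun x => τ x ω.2) (fun j => (U j ω.1 : ℕ))} := by
  simp_rw [lt_treeHit_iff, Set.ofPred_forall]
  refine .iInter fun k => .iInter fun _ => ?_
  have : {ω : Ω₁ × Ω₂ | τ (treeWalk q (fun j => (U j ω.1 : ℕ)) k) ω.2 = false} =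
      ⋃ v, {ω₁ | treeWalk q (fun j => (U j ω₁ : ℕ)) k = v} ×ˢ {ω₂ | τ v ω₂ = false} := by
    ext
    simp
  rw [this]
  exact .iUnion fun v =>
    (measurableSet_treeWalk_eq hUm k v).prod (hτm v (measurableSet_singleton false))

lemma measure_lt_treeHit_le_lintegral {P₁ : Measure Ω₁} {P₂ : Measure Ω₂} [SFinite P₂]
    (hUm : ∀ n, Measurable (U n)) (hτm : ∀ x, Measurable (τ x)) (hτi : iIndepFun τ P₂)
    {r : ℝ≥0∞} (hr : ∀ x, x ≠ [] → P₂ {ω | τ x ω = false} ≤ r) (n : ℕ) :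
    (P₁.prod P₂) {ω | (n : ℝ≥0∞) < treeHit q (fun x => τ x ω.2) (fun j => (U j ω.1 : ℕ))} ≤
      ∫⁻ ω₁, r ^ (treeWalk q (fun j => (U j ω₁ : ℕ)) n).length ∂P₁ := by
  rw [Measure.prod_apply (measurableSet_lt_treeHit hUm hτm n)]
  refine lintegral_mono fun ω₁ => ?_
  set l := treeWalk q (fun j => (U j ω₁ : ℕ)) n
  calc P₂ (Prod.mk ω₁ ⁻¹' {ω | (n : ℝ≥0∞) < treeHit q (fun x => τ x ω.2) (fun j => (U j ω.1 : ℕ))})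
      ≤ P₂ {ω₂ | ∀ x ∈ (range l.length).image l.drop, τ x ω₂ = false} := by
        refine measure_mono fun ω₂ hω₂ => ?_
        simp only [Set.mem_preimage, Set.mem_ofPred_eq, lt_treeHit_iff] at hω₂
        simp only [Set.mem_ofPred_eq, mem_image, mem_range, forall_exists_index, and_imp,
          forall_apply_eq_imp_iff₂]
        intro i _
        obtain ⟨k, hk, hkl⟩ := exists_treeWalk_eq_drop _ n i
        exact hkl ▸ hω₂ k hk
    _ ≤ r ^ ((range l.length).image l.drop).card := by
        refine hτi.measure_forall_mem_eq_le_pow _ _ fun x hx => hr x ?_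
        obtain ⟨i, hi, rfl⟩ := mem_image.1 hx
        simpa [List.drop_eq_nil_iff] using mem_range.1 hi
    _ = r ^ l.length := by rw [card_image_drop_range_length]

end Annealed

/-- If the trapping probabilities satisfy `p_x ≥ p` for all `x ≠ o`, for some
`p > 0`, then all moments of the survival time are finite under the annealed law:
`E_o(T(ω)^k) < ∞` for every `k ∈ ℕ`.  The annealed law is the product of the law `P₁` of the
driving seeds of the walk (i.i.d. uniform) with the law `P₂` of the trap configuration
(independent over vertices, no trap at the root, trap at `x ≠ o` with probability `px x ≥ p`). -/
theorem annealed_survival_all_moments_finite (q : ℕ) (hq : 2 ≤ q)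
    (p : ℝ) (hp : 0 < p)
    (px : List (Fin q) → ℝ) (hpx : ∀ x, x ≠ ([] : List (Fin q)) → p ≤ px x)
    (Ω₁ : Type) (_ : MeasurableSpace Ω₁) (P₁ : Measure Ω₁) (_ : IsProbabilityMeasure P₁)
    (U : ℕ → Ω₁ → Fin (q * (q + 1)))
    (hUm : ∀ n, Measurable (U n))
    (hUi : iIndepFun U P₁)
    (hUu : ∀ n i, P₁ {ω | U n ω = i} = ((q * (q + 1) : ℕ) : ℝ≥0∞)⁻¹)
    (Ω₂ : Type) (_ : MeasurableSpace Ω₂) (P₂ : Measure Ω₂) (_ : IsProbabilityMeasure P₂)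
    (τ : List (Fin q) → Ω₂ → Bool)
    (hτm : ∀ x, Measurable (τ x))
    (hτi : iIndepFun τ P₂)
    (hτx : ∀ x, x ≠ ([] : List (Fin q)) → P₂ {ω | τ x ω = true} = ENNReal.ofReal (px x)) :
    ∀ k : ℕ,
      (∫⁻ ω, (treeHit q (fun x => τ x ω.2) (fun j => (U j ω.1 : ℕ))) ^ k ∂(P₁.prod P₂)) < ⊤ := by
  set m : ℝ := max (1 - p) (2 / 3)
  have hm1 : m < 1 := max_lt (by linarith) (by norm_num)
  have hm : 2 / 3 ≤ m := le_max_right _ _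
  have hqm : 1 < (q : ℝ) * m := by nlinarith [(Nat.ofNat_le_cast.2 hq : (2 : ℝ) ≤ q)]
  have hr0 : ENNReal.ofReal m ≠ 0 := by simpa using hm.trans_lt' (by norm_num)
  have hr1 : ENNReal.ofReal m ≤ 1 := ENNReal.ofReal_le_one.2 hm1.le
  have htrap : ∀ x, x ≠ [] → P₂ {ω | τ x ω = false} ≤ ENNReal.ofReal m := by
    intro x hx
    have hcompl : {ω | τ x ω = false} = {ω | τ x ω = true}ᶜ := by ext; simp
    rw [hcompl, prob_compl_eq_one_sub (s := {ω | τ x ω = true})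
      (hτm x (measurableSet_singleton true)), hτx x hx]
    calc 1 - ENNReal.ofReal (px x) ≤ 1 - ENNReal.ofReal p := by gcongr; exact hpx x hx
      _ = ENNReal.ofReal (1 - p) := by rw [ENNReal.ofReal_sub _ hp.le, ENNReal.ofReal_one]
      _ ≤ ENNReal.ofReal m := ENNReal.ofReal_le_ofReal (le_max_left _ _)
  exact lintegral_pow_lt_top_of_measure_lt_le_geometric _ (measurableSet_lt_treeHit hUm hτm)
    (stepWeight_mean_lt_one hqm hm1) fun n =>
      (measure_lt_treeHit_le_lintegral hUm hτm hτi htrap n).trans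
        (lintegral_pow_length_treeWalk_le (by omega) hUm hUi hUu hr0 hr1 n)
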